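/- Let Y be a set of type 2 or of type 3 whose spine contains the point x, and let P be a plane in ℝ³. Then D_{x,r}(Y,P) > 1/4 for every r > 0. -/

import Mathlib

noncomputable section

open Metric Set

/-- Euclidean 3-space. -/
abbrev E3 := EuclideanSpace ℝ (Fin 3)

/-- The normalized local Hausdorff distance `D_{x,r}(E,F)`. -/
noncomputable def relDist (x : E3) (r : ℝ) (E F : Set E3) : ℝ :=
  r⁻¹ * max (sSup ((fun z => Metric.infDist z F) '' (E ∩ ball x r)))
            (sSup ((fun z => Metric.infDist z E) '' (F ∩ ball x r)))

/-- `R` is the composition of a translation and a rotation of `ℝ³`. -/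
def IsRigidMotion (R : E3 → E3) : Prop :=
  ∃ (f : E3 ≃ₗᵢ[ℝ] E3) (v : E3),
    LinearMap.det (f.toLinearEquiv.toLinearMap) = 1 ∧ ∀ x, R x = f x + v

/-- Sets of type 1 : planes (2-dimensional affine subspaces of `ℝ³`). -/
def IsType1 (Z : Set E3) : Prop :=
  ∃ P : AffineSubspace ℝ E3, Module.finrank ℝ P.direction = 2 ∧ Z = (P : Set E3)

/-- The standard propeller `Prop × ℝ ⊆ ℝ³`. -/
def YBase : Set E3 :=
  {x | (0 ≤ x 0 ∧ x 1 = 0) ∨ (x 0 ≤ 0 ∧ x 1 = -Real.sqrt 3 * x 0) ∨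
       (x 0 ≤ 0 ∧ x 1 = Real.sqrt 3 * x 0)}

/-- The spine `{x₁ = x₂ = 0}` of the standard set of type 2. -/
def YSpineBase : Set E3 := {x | x 0 = 0 ∧ x 1 = 0}

/-- The three faces of the standard set of type 2. -/
def YFaceBase : Fin 3 → Set E3 :=
  ![{x | 0 ≤ x 0 ∧ x 1 = 0},
    {x | x 0 ≤ 0 ∧ x 1 = -Real.sqrt 3 * x 0},
    {x | x 0 ≤ 0 ∧ x 1 = Real.sqrt 3 * x 0}]

/-- Sets of type 2. -/
def IsType2 (Y : Set E3) : Prop := ∃ R, IsRigidMotion R ∧ Y = R '' YBase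

/-- `Y` is a set of type 2 with spine `L`. -/
def Type2Spine (Y L : Set E3) : Prop :=
  ∃ R, IsRigidMotion R ∧ Y = R '' YBase ∧ L = R '' YSpineBase

/-- The four vertices of the regular tetrahedron. -/
noncomputable def tA : Fin 4 → E3 :=
  ![(WithLp.equiv 2 (Fin 3 → ℝ)).symm ![1, 0, 0],
    (WithLp.equiv 2 (Fin 3 → ℝ)).symm ![-(1/3), 2 * Real.sqrt 2 / 3, 0],
    (WithLp.equiv 2 (Fin 3 → ℝ)).symm ![-(1/3), -(Real.sqrt 2 / 3), Real.sqrt 6 / 3],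
    (WithLp.equiv 2 (Fin 3 → ℝ)).symm ![-(1/3), -(Real.sqrt 2 / 3), -(Real.sqrt 6 / 3)]]

/-- The standard set `T₀` of type 3 : the cone over the six edges of the tetrahedron. -/
def TBase : Set E3 :=
  {x | ∃ t : ℝ, 0 ≤ t ∧ ∃ i j : Fin 4, i ≠ j ∧ ∃ z ∈ segment ℝ (tA i) (tA j), x = t • z}

/-- The spine of `T₀` : the four half lines `[0, Aⱼ)`. -/
def TSpineBase : Set E3 := {x | ∃ t : ℝ, 0 ≤ t ∧ ∃ j : Fin 4, x = t • tA j}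

/-- The face of `T₀` over the edge `[Aᵢ, Aⱼ]`. -/
def TFaceBase (i j : Fin 4) : Set E3 :=
  {x | ∃ t : ℝ, 0 ≤ t ∧ ∃ z ∈ segment ℝ (tA i) (tA j), x = t • z}

/-- Sets of type 3. -/
def IsType3 (T : Set E3) : Prop := ∃ R, IsRigidMotion R ∧ T = R '' TBase

/-- `T` is a set of type 3 centered at `c`. -/
def Type3Center (T : Set E3) (c : E3) : Prop :=
  ∃ R, IsRigidMotion R ∧ T = R '' TBase ∧ c = R 0

/-- `T` is a set of type 3 with spine `L`. -/
def Type3Spine (T L : Set E3) : Prop :=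
  ∃ R, IsRigidMotion R ∧ T = R '' TBase ∧ L = R '' TSpineBase

/-- `T` is a set of type 3 centered at `c` with spine `L`. -/
def Type3CenterSpine (T : Set E3) (c : E3) (L : Set E3) : Prop :=
  ∃ R, IsRigidMotion R ∧ T = R '' TBase ∧ c = R 0 ∧ L = R '' TSpineBase

/-- Minimal cones : sets of type 1, 2 or 3. -/
def MinimalCone (Z : Set E3) : Prop := IsType1 Z ∨ IsType2 Z ∨ IsType3 Z

/-- The standing assumption : `E ⊆ ℝ³` is compact, contains the origin,
`0 < ε < 10⁻²⁵`, and `E` is `ε`-close to a minimal cone through `x` in every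
ball `B(x,r) ⊆ B(0,2)` centered on `E`. -/
def Standing (E : Set E3) (ε : ℝ) : Prop :=
  IsCompact E ∧ (0 : E3) ∈ E ∧ 0 < ε ∧ ε < (10 : ℝ) ^ (-25 : ℤ) ∧
    ∀ x ∈ E ∩ ball (0 : E3) 2, ∀ r : ℝ, 0 < r → ball x r ⊆ ball (0 : E3) 2 →
      ∃ Z, MinimalCone Z ∧ x ∈ Z ∧ relDist x r E Z ≤ ε

/-- `a(x,r)`. -/
noncomputable def aNum (E : Set E3) (x : E3) (r : ℝ) : ℝ :=
  sInf {t | ∃ P, IsType1 P ∧ x ∈ P ∧ t = relDist x r E P}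

/-- `b(x,r)`. -/
noncomputable def bNum (E : Set E3) (x : E3) (r : ℝ) : ℝ :=
  sInf {t | ∃ Y L, Type2Spine Y L ∧ x ∈ L ∧ t = relDist x r E Y}

/-- `c(x,r)`. -/
noncomputable def cNum (E : Set E3) (x : E3) (r : ℝ) : ℝ :=
  sInf {t | ∃ T, Type3Center T x ∧ t = relDist x r E T}

/-- `E₁` : the points of type 1. -/
def Eset1 (E : Set E3) (ε : ℝ) : Set E3 :=
  {x | x ∈ E ∩ ball (0 : E3) 2 ∧ ∃ r₀ > 0, ∀ r : ℝ, 0 < r → r < r₀ → aNum E x r ≤ 2 * ε}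

/-- `E₂` : the points of type 2. -/
def Eset2 (E : Set E3) (ε : ℝ) : Set E3 :=
  {x | x ∈ E ∩ ball (0 : E3) 2 ∧ ∃ r₀ > 0, ∀ r : ℝ, 0 < r → r < r₀ → bNum E x r ≤ 1500 * ε}

/-- `E₃` : the points of type 3. -/
def Eset3 (E : Set E3) (ε : ℝ) : Set E3 :=
  {x | x ∈ E ∩ ball (0 : E3) 2 ∧ ∃ r₀ > 0, ∀ r : ℝ, 0 < r → r < r₀ → cNum E x r ≤ 150 * ε}

/-!
At a point `x` of the spine, `Y` contains four rays from `x`: along a unit vector `w` and along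
three unit vectors `eᵢ ⊥ w` at mutual angles `2π/3` (for a set of type 2, `w` spans the spine and
the `eᵢ` the faces; for a set of type 3 and `x = t Aⱼ`, `w = Aⱼ` and the `eᵢ` point into the three
faces through `Aⱼ`). These directions form a tight frame,
`‖n‖² = ⟪w, n⟫² + (2/3) ∑ ⟪eᵢ, n⟫²`, so for a unit normal `n` of `P` one of them, `d`, has
`⟪d, n⟫² ≥ 1/3`. Either `x` is farther than `r/4` from `P`, or the point `x + (9/10) r d` of
`Y ∩ B(x, r)` is at distance at least `(9/10) r / √3 - r/4 > r/4` from `P`.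
-/

open scoped RealInnerProductSpace

section General

variable {V : Type*} [NormedAddCommGroup V] [InnerProductSpace ℝ V]

structure IsPropellerFrame (w : V) (e : Fin 3 → V) : Prop where
  inner_w_w : ⟪w, w⟫ = 1
  inner_w_e : ∀ i, ⟪w, e i⟫ = 0
  inner_e_e : ∀ i k, ⟪e i, e k⟫ = if i = k then 1 else -(1 / 2)

namespace IsPropellerFrame

variable {w : V} {e : Fin 3 → V}

theorem inner_e_w (h : IsPropellerFrame w e) (i : Fin 3) : ⟪e i, w⟫ = 0 := by
  rw [real_inner_comm, h.inner_w_e]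

theorem map {W : Type*} [NormedAddCommGroup W] [InnerProductSpace ℝ W] (h : IsPropellerFrame w e)
    (f : V →ₗᵢ[ℝ] W) : IsPropellerFrame (f w) (f ∘ e) where
  inner_w_w := by rw [f.inner_map_map, h.inner_w_w]
  inner_w_e i := by rw [Function.comp_apply, f.inner_map_map, h.inner_w_e]
  inner_e_e i k := by simp only [Function.comp_apply, f.inner_map_map, h.inner_e_e]

theorem linearIndependent (h : IsPropellerFrame w e) : LinearIndependent ℝ ![w, e 0, e 1] := by
  rw [Fintype.linearIndependent_iff]
  intro g hg
  simp only [Fin.sum_univ_three, Matrix.cons_val_zero, Matrix.cons_val_one,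
    Matrix.cons_val_two, Matrix.head_cons, Matrix.tail_cons] at hg
  have hw := congrArg (⟪w, ·⟫) hg
  have h0 := congrArg (⟪e 0, ·⟫) hg
  have h1 := congrArg (⟪e 1, ·⟫) hg
  simp only [inner_add_right, real_inner_smul_right, inner_zero_right, h.inner_w_w, h.inner_w_e,
    h.inner_e_w, h.inner_e_e] at hw h0 h1
  norm_num at hw h0 h1
  intro i
  fin_cases i <;> simp <;> linarith

theorem exists_eq_add_smul (h : IsPropellerFrame w e) (hV : Module.finrank ℝ V = 3) (n : V) :
    ∃ a b c : ℝ, n = a • w + b • e 0 + c • e 1 := by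
  have hspan := h.linearIndependent.span_eq_top_of_card_eq_finrank (by simp [hV])
  obtain ⟨g, hg⟩ :=
    (Submodule.mem_span_range_iff_exists_fun ℝ).mp (hspan ▸ Submodule.mem_top (x := n))
  refine ⟨g 0, g 1, g 2, ?_⟩
  simp [← hg, Fin.sum_univ_three]

theorem norm_sq_eq (h : IsPropellerFrame w e) (hV : Module.finrank ℝ V = 3) (n : V) :
    ‖n‖ ^ 2 = ⟪w, n⟫ ^ 2 + 2 / 3 * ∑ i, ⟪e i, n⟫ ^ 2 := by
  obtain ⟨a, b, c, rfl⟩ := h.exists_eq_add_smul hV n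
  rw [← real_inner_self_eq_norm_sq]
  simp only [Fin.sum_univ_three, inner_add_left, inner_add_right, real_inner_smul_left,
    real_inner_smul_right, h.inner_w_w, h.inner_w_e, h.inner_e_w, h.inner_e_e]
  norm_num [Fin.ext_iff]
  ring

theorem exists_norm_sq_le (h : IsPropellerFrame w e) (hV : Module.finrank ℝ V = 3) (n : V) :
    ‖n‖ ^ 2 ≤ 3 * ⟪w, n⟫ ^ 2 ∨ ∃ i, ‖n‖ ^ 2 ≤ 3 * ⟪e i, n⟫ ^ 2 := by
  by_contra! hlt
  have := h.norm_sq_eq hV n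
  rw [Fin.sum_univ_three] at this
  linarith [hlt.1, hlt.2 0, hlt.2 1, hlt.2 2]

theorem norm_w (h : IsPropellerFrame w e) : ‖w‖ = 1 := by
  rw [← pow_eq_one_iff_of_nonneg (norm_nonneg w) two_ne_zero, ← real_inner_self_eq_norm_sq,
    h.inner_w_w]

theorem norm_e (h : IsPropellerFrame w e) (i : Fin 3) : ‖e i‖ = 1 := by
  rw [← pow_eq_one_iff_of_nonneg (norm_nonneg _) two_ne_zero, ← real_inner_self_eq_norm_sq,
    h.inner_e_e, if_pos rfl]

end IsPropellerFrame

theorem AffineSubspace.abs_inner_sub_le_infDist {Q : AffineSubspace ℝ V} {p n : V} (hp : p ∈ Q)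
    (hn : n ∈ Q.directionᗮ) (hn1 : ‖n‖ = 1) (z : V) : |⟪z - p, n⟫| ≤ infDist z Q := by
  refine (le_infDist ⟨p, hp⟩).2 fun q hq => ?_
  have hpq : ⟪p - q, n⟫ = 0 :=
    Submodule.inner_right_of_mem_orthogonal (AffineSubspace.vsub_mem_direction hp hq) hn
  calc |⟪z - p, n⟫| = |⟪z - q, n⟫| := by
        rw [← sub_add_sub_cancel z p q, inner_add_left, hpq, add_zero]
    _ ≤ ‖z - q‖ * ‖n‖ := abs_real_inner_le_norm _ _
    _ = dist z q := by rw [hn1, mul_one, dist_eq_norm]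

theorem AffineSubspace.exists_unit_mem_orthogonal_direction [FiniteDimensional ℝ V]
    {Q : AffineSubspace ℝ V} (hQ : Q.direction ≠ ⊤) : ∃ n ∈ Q.directionᗮ, ‖n‖ = 1 := by
  obtain ⟨n, hn, hn0⟩ :=
    Submodule.exists_mem_ne_zero_of_ne_bot (mt Submodule.orthogonal_eq_bot_iff.mp hQ)
  exact ⟨‖n‖⁻¹ • n, Submodule.smul_mem _ _ hn, norm_smul_inv_norm hn0⟩

def HasPropellerRays (Y : Set V) (x : V) : Prop :=
  ∃ (w : V) (e : Fin 3 → V), IsPropellerFrame w e ∧ (∀ s : ℝ, 0 ≤ s → x + s • w ∈ Y) ∧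
    ∀ i, ∀ s : ℝ, 0 ≤ s → x + s • e i ∈ Y

theorem HasPropellerRays.exists_steep_ray {Y : Set V} {x n : V} (hY : HasPropellerRays Y x)
    (hV : Module.finrank ℝ V = 3) (hn : ‖n‖ = 1) :
    ∃ d : V, ‖d‖ = 1 ∧ 1 ≤ 3 * ⟪d, n⟫ ^ 2 ∧ ∀ s : ℝ, 0 ≤ s → x + s • d ∈ Y := by
  obtain ⟨w, e, hf, hw, he⟩ := hY
  rcases hf.exists_norm_sq_le hV n with h | ⟨i, h⟩ <;> rw [hn, one_pow] at h
  · exact ⟨w, hf.norm_w, h, hw⟩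
  · exact ⟨e i, hf.norm_e i, h, he i⟩

-- `3√2/4 = 1/‖a i + a j / 3‖`: this is the unit vector along the component of `a i`
-- orthogonal to `a j`, for `i = j.succAbove m`.
def simplexFrame (a : Fin 4 → V) (j : Fin 4) (m : Fin 3) : V :=
  (3 * √2 / 4) • (a (j.succAbove m) + (1 / 3 : ℝ) • a j)

theorem isPropellerFrame_simplexFrame {a : Fin 4 → V}
    (ha : ∀ i k, ⟪a i, a k⟫ = if i = k then 1 else -(1 / 3)) (j : Fin 4) :
    IsPropellerFrame (a j) (simplexFrame a j) where
  inner_w_w := by rw [ha, if_pos rfl]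
  inner_w_e m := by
    simp only [simplexFrame, inner_smul_right, inner_add_right, ha,
      if_neg (Fin.succAbove_ne j m).symm, if_true]
    ring
  inner_e_e m k := by
    have h2 : √2 ^ 2 = 2 := Real.sq_sqrt zero_le_two
    simp only [simplexFrame, real_inner_smul_left, real_inner_smul_right, inner_add_left,
      inner_add_right, ha, if_neg (Fin.succAbove_ne j _), if_neg (Fin.succAbove_ne j _).symm,
      Fin.succAbove_right_inj]
    split_ifs <;> nlinarith [h2]

end General

theorem IsType1.exists_abs_inner_le_infDist {P : Set E3} (hP : IsType1 P) :
    ∃ p n : E3, ‖n‖ = 1 ∧ ∀ z, |⟪z - p, n⟫| ≤ infDist z P := by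
  obtain ⟨Q, hQ, rfl⟩ := hP
  obtain ⟨p, hp⟩ : (Q : Set E3).Nonempty := by
    rw [AffineSubspace.nonempty_iff_ne_bot]
    rintro rfl
    rw [AffineSubspace.direction_bot, finrank_bot] at hQ
    norm_num at hQ
  have htop : Q.direction ≠ ⊤ := by
    intro h
    rw [h, finrank_top, finrank_euclideanSpace_fin] at hQ
    norm_num at hQ
  obtain ⟨n, hn, hn1⟩ := AffineSubspace.exists_unit_mem_orthogonal_direction htop
  exact ⟨p, n, hn1, Q.abs_inner_sub_le_infDist hp hn hn1⟩

theorem lt_relDist_of_mem {x z : E3} {r c : ℝ} {E F : Set E3} (hr : 0 < r) (hzE : z ∈ E)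
    (hz : z ∈ ball x r) (h : c * r < infDist z F) : c < relDist x r E F := by
  have hbdd : BddAbove ((fun y => infDist y F) '' (E ∩ ball x r)) := by
    refine ⟨infDist x F + r, ?_⟩
    rintro _ ⟨y, ⟨-, hy⟩, rfl⟩
    linarith [infDist_le_infDist_add_dist (x := y) (y := x) (s := F), (mem_ball.mp hy).le]
  rw [relDist, lt_inv_mul_iff₀ hr]
  calc r * c < infDist z F := by linarith
    _ ≤ sSup _ := le_csSup hbdd ⟨z, ⟨hzE, hz⟩, rfl⟩
    _ ≤ _ := le_max_left _ _

theorem HasPropellerRays.quarter_lt_relDist {Y P : Set E3} {x : E3} (hY : HasPropellerRays Y x)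
    (hP : IsType1 P) {r : ℝ} (hr : 0 < r) : 1 / 4 < relDist x r Y P := by
  obtain ⟨p, n, hn, hdist⟩ := hP.exists_abs_inner_le_infDist
  obtain ⟨d, hd, hdn, hdY⟩ := hY.exists_steep_ray finrank_euclideanSpace_fin hn
  suffices ∃ z ∈ Y, z ∈ ball x r ∧ r / 4 < |⟪z - p, n⟫| by
    obtain ⟨z, hzY, hz, hzP⟩ := this
    exact lt_relDist_of_mem hr hzY hz (by linarith [hdist z])
  by_cases hx : r / 4 < |⟪x - p, n⟫|
  · exact ⟨x, by simpa using hdY 0 le_rfl, mem_ball_self hr, hx⟩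
  refine ⟨x + (9 / 10 * r) • d, hdY _ (by positivity), ?_, ?_⟩
  · rw [mem_ball, dist_eq_norm, add_sub_cancel_left, norm_smul, hd, mul_one, Real.norm_eq_abs,
      abs_of_pos (by positivity)]
    linarith
  · have hfar : r / 2 < |9 / 10 * r * ⟪d, n⟫| := by
      rw [← abs_of_pos (half_pos hr)]
      exact sq_lt_sq.mp (by nlinarith)
    rw [add_sub_right_comm, inner_add_left, real_inner_smul_left]
    have htri := abs_sub (⟪x - p, n⟫ + 9 / 10 * r * ⟪d, n⟫) ⟪x - p, n⟫
    rw [add_sub_cancel_left] at htri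
    linarith

theorem HasPropellerRays.image {R : E3 → E3} (hR : IsRigidMotion R) {B : Set E3} {x : E3}
    (h : HasPropellerRays B x) : HasPropellerRays (R '' B) (R x) := by
  obtain ⟨f, v, -, hRfv⟩ := hR
  obtain ⟨w, e, hf, hw, he⟩ := h
  have hray {c : E3} {s : ℝ} (hs : x + s • c ∈ B) : R x + s • f c ∈ R '' B :=
    ⟨_, hs, by rw [hRfv, hRfv, map_add, map_smul]; abel⟩
  exact ⟨f w, f ∘ e, hf.map f.toLinearIsometry, fun s hs => hray (hw s hs),
    fun i s hs => hray (he i s hs)⟩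

def ySpineDir : E3 := !₂[0, 0, 1]

def yFaceDir : Fin 3 → E3 := ![!₂[1, 0, 0], !₂[-(1 / 2), √3 / 2, 0], !₂[-(1 / 2), -(√3 / 2), 0]]

theorem isPropellerFrame_ySpineDir_yFaceDir : IsPropellerFrame ySpineDir yFaceDir where
  inner_w_w := by
    simp [-inner_self_eq_norm_sq_to_K, ySpineDir, EuclideanSpace.inner_eq_star_dotProduct]
  inner_w_e i := by
    fin_cases i <;> simp [ySpineDir, yFaceDir, EuclideanSpace.inner_eq_star_dotProduct]
  inner_e_e i k := by
    fin_cases i <;> fin_cases k <;>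
      simp [-inner_self_eq_norm_sq_to_K, yFaceDir, EuclideanSpace.inner_eq_star_dotProduct] <;>
      ring_nf <;> norm_num

theorem hasPropellerRays_YBase {x : E3} (hx : x ∈ YSpineBase) : HasPropellerRays YBase x := by
  obtain ⟨hx0, hx1⟩ := hx
  refine ⟨ySpineDir, yFaceDir, isPropellerFrame_ySpineDir_yFaceDir, fun s _ => ?_,
    fun i s hs => ?_⟩
  · left
    simp [ySpineDir, hx0, hx1]
  · fin_cases i
    · left; simp [yFaceDir, hx0, hx1, hs]
    · right; left; simp [yFaceDir, hx0, hx1, hs]; ring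
    · right; right; simp [yFaceDir, hx0, hx1, hs]; ring

theorem inner_tA (i k : Fin 4) : ⟪tA i, tA k⟫ = if i = k then 1 else -(1 / 3) := by
  have h2 : √2 ^ 2 = 2 := Real.sq_sqrt zero_le_two
  have h6 : √6 ^ 2 = 6 := Real.sq_sqrt (by norm_num)
  fin_cases i <;> fin_cases k <;>
    simp [-inner_self_eq_norm_sq_to_K, tA, EuclideanSpace.inner_eq_star_dotProduct] <;>
    nlinarith [h2, h6]

theorem smul_add_smul_mem_TBase {i j : Fin 4} (hij : i ≠ j) {α β : ℝ} (hα : 0 ≤ α) (hβ : 0 ≤ β) :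
    α • tA i + β • tA j ∈ TBase := by
  rcases (add_nonneg hα hβ).eq_or_lt with hsum | hsum
  · refine ⟨0, le_rfl, i, j, hij, tA i, left_mem_segment ℝ _ _, ?_⟩
    obtain ⟨rfl, rfl⟩ := (add_eq_zero_iff_of_nonneg hα hβ).1 hsum.symm
    simp
  · refine ⟨α + β, hsum.le, i, j, hij, (α / (α + β)) • tA i + (β / (α + β)) • tA j,
      ⟨_, _, by positivity, by positivity, by field_simp, rfl⟩, ?_⟩
    rw [smul_add, smul_smul, smul_smul, mul_div_cancel₀ _ hsum.ne', mul_div_cancel₀ _ hsum.ne']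

theorem hasPropellerRays_TBase {t : ℝ} (ht : 0 ≤ t) (j : Fin 4) :
    HasPropellerRays TBase (t • tA j) := by
  refine ⟨tA j, simplexFrame tA j, isPropellerFrame_simplexFrame inner_tA j, fun s hs => ?_,
    fun m s hs => ?_⟩
  · have := smul_add_smul_mem_TBase (Fin.succAbove_ne j 0).symm (add_nonneg ht hs) le_rfl
    rwa [zero_smul, add_zero, add_smul] at this
  · have hc : 0 ≤ 3 * √2 / 4 := by positivity
    convert smul_add_smul_mem_TBase (Fin.succAbove_ne j m).symm
      (by positivity : 0 ≤ t + s * (3 * √2 / 4) * (1 / 3)) (mul_nonneg hs hc) using 1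
    simp only [simplexFrame]
    module

theorem Type2Spine.hasPropellerRays {Y L : Set E3} {x : E3} (h : Type2Spine Y L) (hx : x ∈ L) :
    HasPropellerRays Y x := by
  obtain ⟨R, hR, rfl, rfl⟩ := h
  obtain ⟨x₀, hx₀, rfl⟩ := hx
  exact (hasPropellerRays_YBase hx₀).image hR

theorem Type3Spine.hasPropellerRays {Y L : Set E3} {x : E3} (h : Type3Spine Y L) (hx : x ∈ L) :
    HasPropellerRays Y x := by
  obtain ⟨R, hR, rfl, rfl⟩ := h
  obtain ⟨_, ⟨t, ht, j, rfl⟩, rfl⟩ := hx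
  exact (hasPropellerRays_TBase ht j).image hR

/-- Lemma 3.1 (2.10): a set of type 2 or 3 whose spine contains `x` is at
normalized Hausdorff distance more than `1/4` from every plane, at every scale. -/
theorem stmt4 (Y L P : Set E3) (x : E3)
    (hY : Type2Spine Y L ∨ Type3Spine Y L) (hx : x ∈ L) (hP : IsType1 P) :
    ∀ r : ℝ, 0 < r → 1 / 4 < relDist x r Y P := by
  intro r hr
  have hrays : HasPropellerRays Y x :=
    hY.elim (fun h => h.hasPropellerRays hx) (fun h => h.hasPropellerRays hx)
  exact hrays.quarter_lt_relDist hP hr
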